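/- If Q is an abstract key polynomial for w, then the Q-truncation w_Q is a valuation on K(X); that is, w_Q(fg) = w_Q(f) + w_Q(g) and w_Q(f+g) ≥ min(w_Q(f), w_Q(g)) for all f, g ∈ K[X]. -/

import Mathlib

/-!
Choose a root `a` of `Q` in `K̄` with `w̄(X - a)` maximal, so that `δ(Q) = w̄(X - a) =: d`,
and let `u` be the Gauss valuation on `K̄[X]` centred at `a` with weight `d` on `X - a`.
Comparing both sides on the linear factors, `u` agrees with `w̄` on every polynomial all of
whose roots `β` satisfy `w̄(X - β) ≤ d`: on `Q`, and, by the defining property of an abstract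
key polynomial, on every `r` with `deg r < deg Q`. For such `r` the inequality is strict, which
also gives `u(r) = v̄(r(a))`. As `Q(a) = 0`, it follows that `u(r + Q q) = min(u r, u(Q q))`,
and induction along the `Q`-expansion shows `w_Q = u` on `K[X]`.
-/

namespace MLV

open Polynomial

/-- An additive valuation on a commutative ring `R` with values in `Γ ∪ {∞}`
(written additively, with the `min` convention), thought of as the restriction
to `R` of a valuation on its fraction field. -/
structure ValOn (R : Type*) [CommRing R] (Γ : Type*) [AddCommGroup Γ] [LinearOrder Γ] [IsOrderedAddMonoid Γ] where
  toFun : R → WithTop Γ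
  map_zero' : toFun 0 = ⊤
  ne_top' : ∀ f : R, f ≠ 0 → toFun f ≠ ⊤
  map_mul' : ∀ f g : R, toFun (f * g) = toFun f + toFun g
  add_min' : ∀ f g : R, min (toFun f) (toFun g) ≤ toFun (f + g)

variable {K : Type*} [Field K] {Γ : Type*} [AddCommGroup Γ] [LinearOrder Γ] [IsOrderedAddMonoid Γ]

/-- `w` (a valuation on `K(X)`, restricted to `K[X]`) extends the valuation `v` of `K`. -/
def Extends (w : ValOn (Polynomial K) Γ) (v : ValOn K Γ) : Prop :=
  ∀ c : K, w.toFun (C c) = v.toFun c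

/-- `wbar` (a valuation on `K̄(X)`) is a common extension of `w` and of `vbar`. -/
def IsCommonExt {L : Type*} [Field L] [Algebra K L]
    (wbar : ValOn (Polynomial L) Γ) (w : ValOn (Polynomial K) Γ) (vbar : ValOn L Γ) : Prop :=
  (∀ f : Polynomial K, wbar.toFun (f.map (algebraMap K L)) = w.toFun f) ∧
  (∀ c : L, wbar.toFun (C c) = vbar.toFun c)

/-- `δ(f) = max { w̄(X - α) : α ∈ K̄, f(α) = 0 }` (as an element of `WithBot (WithTop Γ)`,
the value `⊥` corresponding to a polynomial without roots). -/
noncomputable def delta {L : Type*} [Field L] [Algebra K L]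
    (wbar : ValOn (Polynomial L) Γ) (f : Polynomial K) : WithBot (WithTop Γ) :=
  (((f.map (algebraMap K L)).roots).map
    fun α => ((wbar.toFun (X - C α) : WithTop Γ) : WithBot (WithTop Γ))).sup

/-- `Q` is an abstract key polynomial for `w` (with respect to the common extension `wbar`
computing `δ`): `Q` is monic and `δ(f) < δ(Q)` for every nonzero `f` with `deg f < deg Q`. -/
def IsABKP {L : Type*} [Field L] [Algebra K L]
    (wbar : ValOn (Polynomial L) Γ) (Q : Polynomial K) : Prop :=
  Q.Monic ∧ ∀ f : Polynomial K, f ≠ 0 → f.degree < Q.degree → delta wbar f < delta wbar Q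

/-- The `Q`-truncation `w_Q` of `w`: on the `Q`-expansion `f = ∑ fᵢ Qⁱ` it equals
`min_i w(fᵢ Qⁱ)`. -/
noncomputable def truncVal (w : ValOn (Polynomial K) Γ) (Q f : Polynomial K) : WithTop Γ :=
  (Finset.range (f.natDegree + 1)).inf fun i => w.toFun ((f /ₘ Q ^ i) %ₘ Q * Q ^ i)

/-- `f ∼_u g` : `u(f - g) > u f = u g`. -/
def EquivMod (u : Polynomial K → WithTop Γ) (f g : Polynomial K) : Prop :=
  u f < u (f - g) ∧ u f = u g

/-- `f ∣_u g` : `g ∼_u f h` for some `h`. -/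
def DvdMod (u : Polynomial K → WithTop Γ) (f g : Polynomial K) : Prop :=
  ∃ h : Polynomial K, EquivMod u g (f * h)

/-- A key polynomial for `u`: monic, `u`-irreducible and `u`-minimal. -/
def IsKeyPol (u : Polynomial K → WithTop Γ) (φ : Polynomial K) : Prop :=
  φ.Monic ∧
  (∀ h q : Polynomial K, DvdMod u φ (h * q) → DvdMod u φ h ∨ DvdMod u φ q) ∧
  (∀ h : Polynomial K, h ≠ 0 → DvdMod u φ h → φ.degree ≤ h.degree)

/-- A key polynomial for `u` of minimal degree (i.e. of degree `deg(u)`). -/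
def IsMinKeyPol (u : Polynomial K → WithTop Γ) (φ : Polynomial K) : Prop :=
  IsKeyPol u φ ∧ ∀ ψ : Polynomial K, IsKeyPol u ψ → φ.degree ≤ ψ.degree

/-- `u ≤ u'` pointwise on `K[X]`. -/
def FnLe (u u' : Polynomial K → WithTop Γ) : Prop :=
  ∀ f : Polynomial K, u f ≤ u' f

/-- `u < u'` : `u ≤ u'` and `u f < u' f` for some `f`. -/
def FnLt (u u' : Polynomial K → WithTop Γ) : Prop :=
  FnLe u u' ∧ ∃ f : Polynomial K, u f < u' f

/-- `g ∈ Φ(u, u')` : `g` is monic of minimal degree with `u g < u' g`. -/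
def InPhi (u u' : Polynomial K → WithTop Γ) (g : Polynomial K) : Prop :=
  g.Monic ∧ u g < u' g ∧
  ∀ h : Polynomial K, h.Monic → u h < u' h → g.degree ≤ h.degree

/-- The value at `f` of the augmented valuation `[u; φ, γ]`, computed via the
`φ`-expansion `f = ∑ fᵢ φⁱ` as `min_i (u fᵢ + i γ)`. -/
noncomputable def augVal (u : Polynomial K → WithTop Γ) (φ : Polynomial K) (γ : Γ)
    (f : Polynomial K) : WithTop Γ :=
  (Finset.range (f.natDegree + 1)).inf
    fun i => u ((f /ₘ φ ^ i) %ₘ φ) + i • ((γ : WithTop Γ))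

/-- `u' = [u; φ, γ]` is the ordinary augmentation of `u` at the key polynomial `φ`
with value `γ > u φ`. -/
def IsOrdAug (u : Polynomial K → WithTop Γ) (φ : Polynomial K) (γ : Γ)
    (u' : Polynomial K → WithTop Γ) : Prop :=
  IsKeyPol u φ ∧ u φ < (γ : WithTop Γ) ∧ ∀ f : Polynomial K, u' f = augVal u φ γ f

/-- A continuous family of augmentations `(ρ_i = [w'; χ_i, γ_i])_{i ∈ ι}` of `w'`. -/
structure ContFamily (w' : ValOn (Polynomial K) Γ) (ι : Type*) [LinearOrder ι] where
  chi : ι → Polynomial K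
  gam : ι → Γ
  rho : ι → ValOn (Polynomial K) Γ
  no_last : ∀ i : ι, ∃ j : ι, i < j
  gam_mono : StrictMono gam
  aug : ∀ i : ι, IsOrdAug w'.toFun (chi i) (gam i) (rho i).toFun
  deg_eq : ∀ i j : ι, (chi i).degree = (chi j).degree
  key_step : ∀ i j : ι, i < j → IsKeyPol (rho i).toFun (chi j)
  not_equiv : ∀ i j : ι, i < j → ¬ EquivMod (rho i).toFun (chi j) (chi i)
  step : ∀ i j : ι, i < j → IsOrdAug (rho i).toFun (chi j) (gam j) (rho j).toFun

/-- `f` is `W`-stable with stable value `c`. -/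
def StableAt {w' : ValOn (Polynomial K) Γ} {ι : Type*} [LinearOrder ι]
    (F : ContFamily w' ι) (f : Polynomial K) (c : WithTop Γ) : Prop :=
  ∃ i0 : ι, ∀ i : ι, i0 ≤ i → (F.rho i).toFun f = c

/-- `f` is `W`-stable. -/
def IsStable {w' : ValOn (Polynomial K) Γ} {ι : Type*} [LinearOrder ι]
    (F : ContFamily w' ι) (f : Polynomial K) : Prop :=
  ∃ c : WithTop Γ, StableAt F f c

/-- The valuation `w` is the stable limit of the family `F`. -/
def IsStableLimit {w' : ValOn (Polynomial K) Γ} {ι : Type*} [LinearOrder ι]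
    (F : ContFamily w' ι) (w : ValOn (Polynomial K) Γ) : Prop :=
  ∀ f : Polynomial K, StableAt F f (w.toFun f)

/-- `Q` is a MacLane–Vaquié limit key polynomial for `F`: monic, `F`-unstable,
of minimal degree among unstable polynomials. -/
def IsLimitKP {w' : ValOn (Polynomial K) Γ} {ι : Type*} [LinearOrder ι]
    (F : ContFamily w' ι) (Q : Polynomial K) : Prop :=
  Q.Monic ∧ ¬ IsStable F Q ∧ ∀ g : Polynomial K, ¬ IsStable F g → Q.degree ≤ g.degree

/-- The continuous family `F` is essential: `deg(W) < m_∞ < ∞`. -/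
def IsEssential {w' : ValOn (Polynomial K) Γ} {ι : Type*} [LinearOrder ι]
    (F : ContFamily w' ι) : Prop :=
  (∃ f : Polynomial K, ¬ IsStable F f) ∧
  ∀ (i : ι) (f : Polynomial K), ¬ IsStable F f → (F.chi i).degree < f.degree

/-- `w = [F; Q, γ]` is the limit augmentation of the family `F` at the limit key
polynomial `Q` with value `γ`: on `Q`-expansions, `w f = min_i (ρ_W(fᵢ) + iγ)`, which
since the coefficients are stable is the eventual value of `[ρ_i; Q, γ]` on `f`. -/
def IsLimitAug {w' : ValOn (Polynomial K) Γ} {ι : Type*} [LinearOrder ι]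
    (F : ContFamily w' ι) (Q : Polynomial K) (γ : Γ)
    (w : ValOn (Polynomial K) Γ) : Prop :=
  IsLimitKP F Q ∧ (∀ i : ι, (F.rho i).toFun Q < (γ : WithTop Γ)) ∧
  ∀ f : Polynomial K, ∃ i0 : ι, ∀ i : ι, i0 ≤ i → w.toFun f = augVal (F.rho i).toFun Q γ f

/-- `w` is a depth-zero valuation `w_{α,δ}` over `v`. -/
def IsDepthZero (v : ValOn K Γ) (w : ValOn (Polynomial K) Γ) : Prop :=
  ∃ (α : K) (d : Γ), ∀ f : Polynomial K,
    w.toFun f = (Finset.range (f.natDegree + 1)).inf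
      fun i => v.toFun (((Polynomial.taylor α) f).coeff i) + i • ((d : WithTop Γ))

/-- An ordinary augmentation step of a MacLane–Vaquié chain:
`u' = [u; φ, γ]` with `deg(u) < deg Φ(u, u')`. -/
def OrdMLVStep (u u' : Polynomial K → WithTop Γ) (φ : Polynomial K) (γ : Γ) : Prop :=
  IsOrdAug u φ γ u' ∧
  ∀ ψ g : Polynomial K, IsMinKeyPol u ψ → InPhi u u' g → ψ.degree < g.degree

/-- A limit augmentation step of a MacLane–Vaquié chain, with the underlying essential
continuous family `F` made explicit: `w = [F; φ, γ]`, `deg(w') = deg Φ(w', w)` and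
`φprev ∉ Φ(w', w)`. -/
def LimMLVStepWith {w' : ValOn (Polynomial K) Γ} {ι : Type*} [LinearOrder ι]
    (F : ContFamily w' ι) (w : ValOn (Polynomial K) Γ)
    (φprev φ : Polynomial K) (γ : Γ) : Prop :=
  IsEssential F ∧ IsLimitAug F φ γ w ∧
  (∀ ψ g : Polynomial K, IsMinKeyPol w'.toFun ψ → InPhi w'.toFun w.toFun g →
    ψ.degree = g.degree) ∧
  ¬ InPhi w'.toFun w.toFun φprev

/-- A limit augmentation step of a MacLane–Vaquié chain (the underlying essential
continuous family being existentially quantified). -/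
def LimMLVStep (w' w : ValOn (Polynomial K) Γ) (φprev φ : Polynomial K) (γ : Γ) : Prop :=
  ∃ (ι : Type) (li : LinearOrder ι) (F : @ContFamily K _ Γ _ _ _ w' ι li),
    @LimMLVStepWith K _ Γ _ _ _ w' ι li F w φprev φ γ

/-- Membership in the index set `I`: `I = ℕ` if `o = none`, and `I = {0, …, N}`
if `o = some N`. -/
def InIdx (o : Option ℕ) (j : ℕ) : Prop :=
  ∀ N : ℕ, o = some N → j ≤ N

/-- An induced complete sequence `{Q_i}_{i ∈ Δ}` of abstract key polynomials for `w`: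
a complete sequence of ABKPs, organized in blocks `Δ_j = {j} ∪ ϑ_j` (for `j` in
`I = {0,…,N}` or `I = ℕ`), satisfying the properties of Remark 1.3.  Here `blk i`
is the block of an index `i ∈ Δ`, `main j ∈ Δ` is the distinguished first element
of the block `Δ_j`, and `ϑ_j = {i ∈ Δ | blk i = j, i ≠ main j}`. -/
structure ICS {L : Type*} [Field L] [Algebra K L]
    (wbar : ValOn (Polynomial L) Γ) (w : ValOn (Polynomial K) Γ)
    (Δ : Type*) [LinearOrder Δ] where
  Q : Δ → Polynomial K
  abkp : ∀ i : Δ, IsABKP wbar (Q i)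
  wf : WellFoundedLT Δ
  delta_mono : ∀ i i' : Δ, i < i' → delta wbar (Q i) < delta wbar (Q i')
  wval_mono : ∀ i i' : Δ, i < i' → w.toFun (Q i) < w.toFun (Q i')
  complete : ∀ f : Polynomial K, f ≠ 0 →
    ∃ i : Δ, (Q i).degree ≤ f.degree ∧ truncVal w (Q i) f = w.toFun f
  Ifin : Option ℕ
  blk : Δ → ℕ
  main : ℕ → Δ
  blk_mono : ∀ i i' : Δ, i ≤ i' → blk i ≤ blk i'
  blk_mem : ∀ i : Δ, InIdx Ifin (blk i)
  blk_main : ∀ j : ℕ, InIdx Ifin j → blk (main j) = j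
  main_min : ∀ (j : ℕ) (i : Δ), blk i = j → main j ≤ i
  theta_no_last : ∀ i : Δ, i ≠ main (blk i) →
    ∃ i' : Δ, blk i' = blk i ∧ i' ≠ main (blk i) ∧ i < i'
  deg_blk_eq : ∀ i i' : Δ, blk i = blk i' → (Q i).degree = (Q i').degree
  deg_blk_lt : ∀ i i' : Δ, blk i < blk i' → (Q i).degree < (Q i').degree
  degQ0 : (Q (main 0)).degree = 1

namespace ValOn

variable {R : Type*} [CommRing R] (V : ValOn R Γ)

lemma map_one [Nontrivial R] : V.toFun 1 = 0 := by
  have h := V.map_mul' 1 1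
  rw [mul_one] at h
  lift V.toFun 1 to Γ using V.ne_top' 1 one_ne_zero with a
  exact_mod_cast (left_eq_add.mp (by exact_mod_cast h : a = a + a))

def toAddValuation [Nontrivial R] : AddValuation R (WithTop Γ) :=
  AddValuation.of V.toFun V.map_zero' V.map_one V.add_min' V.map_mul'

lemma map_neg [Nontrivial R] (x : R) : V.toFun (-x) = V.toFun x :=
  V.toAddValuation.map_neg x

lemma map_add_eq_of_lt_left [Nontrivial R] {x y : R} (h : V.toFun x < V.toFun y) :
    V.toFun (x + y) = V.toFun x :=
  V.toAddValuation.map_add_eq_of_lt_left h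

lemma map_add_eq_min_of_le [Nontrivial R] {x y : R} (h : V.toFun (x + y) ≤ V.toFun x) :
    V.toFun (x + y) = min (V.toFun x) (V.toFun y) := by
  rcases lt_or_ge (V.toFun y) (V.toFun x) with hyx | hxy
  · rw [add_comm, V.map_add_eq_of_lt_left hyx, min_eq_right hyx.le]
  · exact le_antisymm (h.trans_eq (min_eq_left hxy).symm) (V.add_min' x y)

lemma inf_le_map_sum [Nontrivial R] {ι : Type*} (s : Finset ι) (f : ι → R) :
    s.inf (fun i => V.toFun (f i)) ≤ V.toFun (∑ i ∈ s, f i) :=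
  V.toAddValuation.map_le_sum fun _ hi => Finset.inf_le hi

lemma map_mul_add_nsmul {d : Γ} (x y : R) (i j : ℕ) :
    V.toFun (x * y) + ((i + j) • d : Γ) =
      (V.toFun x + (i • d : Γ)) + (V.toFun y + (j • d : Γ)) := by
  rw [V.map_mul', add_nsmul, WithTop.coe_add, add_add_add_comm]

def comap {S : Type*} [CommRing S] (V : ValOn S Γ) (φ : R →+* S) (hφ : Function.Injective φ) :
    ValOn R Γ where
  toFun x := V.toFun (φ x)
  map_zero' := by rw [map_zero, V.map_zero']
  ne_top' x hx := V.ne_top' _ ((map_ne_zero_iff φ hφ).mpr hx)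
  map_mul' x y := by rw [map_mul, V.map_mul']
  add_min' x y := by rw [map_add]; exact V.add_min' _ _

end ValOn

section GaussValuation

open Finset.HasAntidiagonal

variable {R : Type*} [CommRing R] (V : ValOn R Γ) (d : Γ)

noncomputable def gaussVal (p : R[X]) : WithTop Γ :=
  p.support.inf fun i => V.toFun (p.coeff i) + (i • d : Γ)

variable {V d}

lemma gaussVal_le (p : R[X]) (i : ℕ) :
    gaussVal V d p ≤ V.toFun (p.coeff i) + (i • d : Γ) := by
  by_cases hi : i ∈ p.support
  · exact Finset.inf_le hi
  · rw [notMem_support_iff.mp hi, V.map_zero', top_add]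
    exact le_top

lemma le_gaussVal_iff {c : WithTop Γ} {p : R[X]} :
    c ≤ gaussVal V d p ↔ ∀ i : ℕ, c ≤ V.toFun (p.coeff i) + (i • d : Γ) :=
  ⟨fun h i => h.trans (gaussVal_le p i), fun h => Finset.le_inf fun i _ => h i⟩

lemma gaussVal_zero : gaussVal V d (0 : R[X]) = ⊤ := by
  simp [gaussVal]

lemma gaussVal_ne_top {p : R[X]} (hp : p ≠ 0) : gaussVal V d p ≠ ⊤ :=
  ne_top_of_le_ne_top
    (WithTop.add_ne_top.mpr ⟨V.ne_top' _ (leadingCoeff_ne_zero.mpr hp), WithTop.coe_ne_top⟩)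
    (gaussVal_le p p.natDegree)

lemma gaussVal_C (c : R) : gaussVal V d (C c) = V.toFun c := by
  refine le_antisymm (by simpa using gaussVal_le (V := V) (d := d) (C c) 0)
    (le_gaussVal_iff.mpr fun i => ?_)
  rcases i with _ | i
  · simp
  · simp [V.map_zero']

lemma gaussVal_X_add_C [Nontrivial R] (b : R) :
    gaussVal V d (X + C b) = min (V.toFun b) (d : WithTop Γ) := by
  refine le_antisymm (le_min ?_ ?_) (le_gaussVal_iff.mpr fun i => ?_)
  · have h := gaussVal_le (V := V) (d := d) (X + C b) 0
    rw [coeff_add] at h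
    simpa using h
  · have h := gaussVal_le (V := V) (d := d) (X + C b) 1
    rw [coeff_add] at h
    simpa [V.map_one] using h
  · rcases i with _ | _ | i
    · simp [coeff_add]
    · simp [coeff_add, V.map_one]
    · simp [coeff_add, coeff_X, V.map_zero']

lemma min_gaussVal_le_add (p q : R[X]) :
    min (gaussVal V d p) (gaussVal V d q) ≤ gaussVal V d (p + q) :=
  le_gaussVal_iff.mpr fun i =>
    calc min (gaussVal V d p) (gaussVal V d q)
        ≤ min (V.toFun (p.coeff i) + (i • d : Γ)) (V.toFun (q.coeff i) + (i • d : Γ)) :=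
          min_le_min (gaussVal_le p i) (gaussVal_le q i)
      _ = min (V.toFun (p.coeff i)) (V.toFun (q.coeff i)) + (i • d : Γ) :=
          min_add_add_right _ _ _
      _ ≤ V.toFun ((p + q).coeff i) + (i • d : Γ) := by
          rw [coeff_add]; exact add_le_add_left (V.add_min' _ _) _

lemma exists_least_eq_gaussVal {p : R[X]} (hp : p ≠ 0) :
    ∃ i, V.toFun (p.coeff i) + (i • d : Γ) = gaussVal V d p ∧
      ∀ j < i, gaussVal V d p < V.toFun (p.coeff j) + (j • d : Γ) := by
  classical
  have hex : ∃ i, V.toFun (p.coeff i) + (i • d : Γ) = gaussVal V d p := by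
    obtain ⟨i, -, hi⟩ := Finset.exists_mem_eq_inf p.support (support_nonempty.mpr hp)
      fun i => V.toFun (p.coeff i) + (i • d : Γ)
    exact ⟨i, hi.symm⟩
  exact ⟨Nat.find hex, Nat.find_spec hex, fun j hj =>
    lt_of_le_of_ne (gaussVal_le p j) (Ne.symm (Nat.find_min hex hj))⟩

lemma add_gaussVal_le_gaussVal_mul [Nontrivial R] (p q : R[X]) :
    gaussVal V d p + gaussVal V d q ≤ gaussVal V d (p * q) := by
  refine le_gaussVal_iff.mpr fun k => ?_
  calc gaussVal V d p + gaussVal V d q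
      ≤ (antidiagonal k).inf fun x => V.toFun (p.coeff x.1 * q.coeff x.2) + (k • d : Γ) :=
        Finset.le_inf fun x hx => by
          rw [← mem_antidiagonal.mp hx, V.map_mul_add_nsmul]
          exact add_le_add (gaussVal_le p x.1) (gaussVal_le q x.2)
    _ = (antidiagonal k).inf (fun x => V.toFun (p.coeff x.1 * q.coeff x.2)) + (k • d : Γ) :=
        (Finset.apply_inf_eq_inf_comp_of_linearOrder (· + ((k • d : Γ) : WithTop Γ))
          (fun _ _ h => add_le_add_left h _) (top_add _)).symm
    _ ≤ V.toFun ((p * q).coeff k) + (k • d : Γ) := by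
        rw [coeff_mul]
        exact add_le_add_left (V.inf_le_map_sum _ _) _

lemma gaussVal_mul_le_add [Nontrivial R] {p q : R[X]} (hp : p ≠ 0) (hq : q ≠ 0) :
    gaussVal V d (p * q) ≤ gaussVal V d p + gaussVal V d q := by
  obtain ⟨i, hi, hi_lt⟩ := exists_least_eq_gaussVal (V := V) (d := d) hp
  obtain ⟨j, hj, hj_lt⟩ := exists_least_eq_gaussVal (V := V) (d := d) hq
  have hdom : ∀ x ∈ (antidiagonal (i + j)).erase (i, j),
      V.toFun (p.coeff i * q.coeff j) < V.toFun (p.coeff x.1 * q.coeff x.2) := by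
    intro x hx
    obtain ⟨hxij, hx⟩ := Finset.mem_erase.mp hx
    have hsum := mem_antidiagonal.mp hx
    rw [← WithTop.add_lt_add_iff_right (WithTop.coe_ne_top (a := (i + j) • d)),
      V.map_mul_add_nsmul, ← hsum, V.map_mul_add_nsmul, hi, hj]
    rcases lt_or_ge x.1 i with h1 | h1
    · exact WithTop.add_lt_add_of_lt_of_le (gaussVal_ne_top hq) (hi_lt _ h1) (gaussVal_le q _)
    · have h2 : x.2 < j := by
        by_contra! h2
        exact hxij (Prod.ext (by omega) (by omega))
      exact WithTop.add_lt_add_of_le_of_lt (gaussVal_ne_top hp) (gaussVal_le p _) (hj_lt _ h2)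
  have hcoeff : V.toFun ((p * q).coeff (i + j)) = V.toFun (p.coeff i * q.coeff j) := by
    have hij : (i, j) ∈ antidiagonal (i + j) := mem_antidiagonal.mpr rfl
    rw [coeff_mul, ← Finset.add_sum_erase _ _ hij]
    refine V.map_add_eq_of_lt_left (lt_of_lt_of_le ?_ (V.inf_le_map_sum _ _))
    refine (Finset.lt_inf_iff (lt_top_iff_ne_top.mpr fun htop => ?_)).mpr hdom
    have h := V.map_mul_add_nsmul (d := d) (p.coeff i) (q.coeff j) i j
    rw [htop, top_add, hi, hj] at h
    exact WithTop.add_ne_top.mpr ⟨gaussVal_ne_top hp, gaussVal_ne_top hq⟩ h.symm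
  calc gaussVal V d (p * q) ≤ V.toFun ((p * q).coeff (i + j)) + ((i + j) • d : Γ) :=
        gaussVal_le _ _
    _ = gaussVal V d p + gaussVal V d q := by rw [hcoeff, V.map_mul_add_nsmul, hi, hj]

lemma gaussVal_mul [Nontrivial R] (p q : R[X]) :
    gaussVal V d (p * q) = gaussVal V d p + gaussVal V d q := by
  rcases eq_or_ne p 0 with rfl | hp
  · simp [gaussVal_zero]
  rcases eq_or_ne q 0 with rfl | hq
  · simp [gaussVal_zero]
  exact le_antisymm (gaussVal_mul_le_add hp hq) (add_gaussVal_le_gaussVal_mul p q)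

variable (V d)

noncomputable def gaussValuation [Nontrivial R] : ValOn R[X] Γ where
  toFun := gaussVal V d
  map_zero' := gaussVal_zero
  ne_top' _ := gaussVal_ne_top
  map_mul' := gaussVal_mul
  add_min' := min_gaussVal_le_add

end GaussValuation

lemma divByMonic_divByMonic {R : Type*} [CommRing R] {P Q : R[X]}
    (hP : P.Monic) (hQ : Q.Monic) (f : R[X]) : f /ₘ P /ₘ Q = f /ₘ (P * Q) := by
  nontriviality R
  refine ((div_modByMonic_unique (f /ₘ P /ₘ Q) (f %ₘ P + P * (f /ₘ P %ₘ Q)) (hP.mul hQ)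
    ⟨?_, ?_⟩).1).symm
  · calc f %ₘ P + P * (f /ₘ P %ₘ Q) + P * Q * (f /ₘ P /ₘ Q)
        = f %ₘ P + P * (f /ₘ P %ₘ Q + Q * (f /ₘ P /ₘ Q)) := by ring
      _ = f := by rw [modByMonic_add_div, modByMonic_add_div]
  · have hP0 : P.degree ≠ ⊥ := degree_ne_bot.mpr hP.ne_zero
    rw [hQ.degree_mul]
    refine (degree_add_le _ _).trans_lt (max_lt ?_ ?_)
    · exact (degree_modByMonic_lt f hP).trans_le
        (le_add_of_nonneg_right (zero_le_degree_iff.mpr hQ.ne_zero))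
    · rw [hP.degree_mul_comm, hP.degree_mul, add_comm]
      exact WithBot.add_lt_add_left hP0 (degree_modByMonic_lt _ hQ)

section Truncation

variable (w : ValOn K[X] Γ) (Q : K[X])

noncomputable def truncTerm (f : K[X]) (i : ℕ) : WithTop Γ :=
  w.toFun ((f /ₘ Q ^ i) %ₘ Q * Q ^ i)

variable {w Q}

lemma truncTerm_zero (f : K[X]) : truncTerm w Q f 0 = w.toFun (f %ₘ Q) := by
  rw [truncTerm, pow_zero, divByMonic_one, mul_one]

lemma truncTerm_succ (hQ : Q.Monic) (f : K[X]) (i : ℕ) :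
    truncTerm w Q f (i + 1) = w.toFun Q + truncTerm w Q (f /ₘ Q) i := by
  rw [truncTerm, truncTerm, pow_succ', ← divByMonic_divByMonic hQ (hQ.pow i), ← mul_assoc,
    mul_comm _ Q, mul_assoc, w.map_mul']

lemma truncTerm_eq_top (hQ : Q.Monic) (hdeg : 0 < Q.natDegree) {f : K[X]} {i : ℕ}
    (hi : f.natDegree < i) : truncTerm w Q f i = ⊤ := by
  have hdiv : f /ₘ Q ^ i = 0 := by
    refine (divByMonic_eq_zero_iff (hQ.pow i)).mpr (degree_lt_degree ?_)
    rw [hQ.natDegree_pow]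
    exact hi.trans_le (Nat.le_mul_of_pos_right i hdeg)
  rw [truncTerm, hdiv, zero_modByMonic, zero_mul, w.map_zero']

lemma truncVal_eq_inf_range (hQ : Q.Monic) (hdeg : 0 < Q.natDegree) {f : K[X]} {N : ℕ}
    (hN : f.natDegree < N) : truncVal w Q f = (Finset.range N).inf (truncTerm w Q f) := by
  refine le_antisymm (Finset.le_inf fun i _ => ?_) (Finset.le_inf fun i hi => ?_)
  · rcases le_or_gt i f.natDegree with hi | hi
    · exact Finset.inf_le (Finset.mem_range.mpr (Nat.lt_succ_of_le hi))
    · exact le_top.trans_eq (truncTerm_eq_top hQ hdeg hi).symm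
  · exact Finset.inf_le (Finset.mem_range.mpr ((Finset.mem_range.mp hi).trans_le hN))

lemma truncVal_eq_min (hQ : Q.Monic) (hdeg : 0 < Q.natDegree) (f : K[X]) :
    truncVal w Q f = min (w.toFun (f %ₘ Q)) (w.toFun Q + truncVal w Q (f /ₘ Q)) := by
  have hdiv : (f /ₘ Q).natDegree < f.natDegree + 1 :=
    Nat.lt_succ_of_le ((natDegree_divByMonic f hQ).trans_le (Nat.sub_le _ _))
  rw [truncVal_eq_inf_range hQ hdeg (by omega : f.natDegree < f.natDegree + 1 + 1),
    truncVal_eq_inf_range hQ hdeg hdiv, Finset.range_add_one' (f.natDegree + 1),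
    Finset.inf_insert, Finset.inf_map, truncTerm_zero,
    Finset.apply_inf_eq_inf_comp_of_linearOrder (w.toFun Q + ·)
      (fun _ _ h => add_le_add_right h _) (add_top (w.toFun Q))]
  exact congrArg _ (Finset.inf_congr rfl fun i _ => truncTerm_succ hQ f i)

lemma truncVal_zero : truncVal w Q 0 = ⊤ := by
  simp [truncVal, w.map_zero']

lemma truncVal_one (f : K[X]) : truncVal w 1 f = ⊤ := by
  simp [truncVal, w.map_zero']

end Truncation

section Splitting

variable {L : Type*} [Field L]

lemma apply_eq_of_splits {M : Type*} [AddCommMonoid M] {φ ψ : L[X] → M}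
    (hφ : ∀ p q, φ (p * q) = φ p + φ q) (hψ : ∀ p q, ψ (p * q) = ψ p + ψ q)
    (hφ1 : φ 1 = 0) (hψ1 : ψ 1 = 0) {F : L[X]} (hF : F.Splits)
    (hlc : φ (C F.leadingCoeff) = ψ (C F.leadingCoeff))
    (hroots : ∀ β ∈ F.roots, φ (X - C β) = ψ (X - C β)) : φ F = ψ F := by
  have hprod : ∀ χ : L[X] → M, (∀ p q, χ (p * q) = χ p + χ q) → χ 1 = 0 →
      ∀ s : Multiset L[X], χ s.prod = (s.map χ).sum := by
    intro χ hχ hχ1 s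
    induction s using Multiset.induction_on with
    | empty => simpa using hχ1
    | cons p s ih => rw [Multiset.prod_cons, hχ, ih, Multiset.map_cons, Multiset.sum_cons]
  rw [hF.eq_prod_roots, hφ, hψ, hlc, hprod φ hφ hφ1, hprod ψ hψ hψ1, Multiset.map_map,
    Multiset.map_map]
  exact congrArg _ (congrArg _ (Multiset.map_congr rfl hroots))

end Splitting

section GaussValuationAt

variable {R : Type*} [CommRing R] [Nontrivial R] (V : ValOn R Γ) (d : Γ) (a : R)

noncomputable def gaussValAt : ValOn R[X] Γ :=
  (gaussValuation V d).comap (taylorAlgHom a).toRingHom (taylor_injective a)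

lemma gaussValAt_apply (F : R[X]) : (gaussValAt V d a).toFun F = gaussVal V d (taylor a F) :=
  rfl

variable {V d a}

lemma gaussValAt_C (c : R) : (gaussValAt V d a).toFun (C c) = V.toFun c := by
  rw [gaussValAt_apply, taylor_C, gaussVal_C]

lemma gaussValAt_X_sub_C (β : R) :
    (gaussValAt V d a).toFun (X - C β) = min (V.toFun (a - β)) (d : WithTop Γ) := by
  rw [gaussValAt_apply, map_sub, taylor_X, taylor_C, add_sub_assoc, ← C_sub, gaussVal_X_add_C]

lemma gaussValAt_le_eval (F : R[X]) : (gaussValAt V d a).toFun F ≤ V.toFun (F.eval a) := by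
  simpa [gaussValAt_apply] using gaussVal_le (V := V) (d := d) (taylor a F) 0

end GaussValuationAt

section CommonExtension

variable {L : Type*} [Field L] {vbar : ValOn L Γ} {wbar : ValOn L[X] Γ} {a β : L} {d : Γ}

lemma val_sub_eq_of_lt (hC : ∀ c, wbar.toFun (C c) = vbar.toFun c)
    (hd : wbar.toFun (X - C a) = d) (h : wbar.toFun (X - C β) < d) :
    vbar.toFun (a - β) = wbar.toFun (X - C β) := by
  have hsum : (X - C β) + -(X - C a) = C (a - β) := by rw [C_sub]; ring
  rw [← hC, ← hsum, wbar.map_add_eq_of_lt_left (by rwa [wbar.map_neg, hd])]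

lemma min_val_sub_eq_of_le (hC : ∀ c, wbar.toFun (C c) = vbar.toFun c)
    (hd : wbar.toFun (X - C a) = d) (h : wbar.toFun (X - C β) ≤ d) :
    min (vbar.toFun (a - β)) (d : WithTop Γ) = wbar.toFun (X - C β) := by
  rcases h.lt_or_eq with h | h
  · rw [val_sub_eq_of_lt hC hd h, min_eq_left h.le]
  · have hsum : (X - C β) + -(X - C a) = C (a - β) := by rw [C_sub]; ring
    have hge := wbar.add_min' (X - C β) (-(X - C a))
    rw [wbar.map_neg, hd, hsum, hC, h, min_self] at hge
    rw [min_eq_right hge, h]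

variable [IsAlgClosed L]

lemma gaussValAt_eq_of_roots_le (hC : ∀ c, wbar.toFun (C c) = vbar.toFun c)
    (hd : wbar.toFun (X - C a) = d) {F : L[X]}
    (h : ∀ β ∈ F.roots, wbar.toFun (X - C β) ≤ d) :
    (gaussValAt vbar d a).toFun F = wbar.toFun F :=
  apply_eq_of_splits (gaussValAt vbar d a).map_mul' wbar.map_mul' (ValOn.map_one _)
    wbar.map_one (IsAlgClosed.splits F) (by rw [gaussValAt_C, hC])
    fun β hβ => by rw [gaussValAt_X_sub_C, min_val_sub_eq_of_le hC hd (h β hβ)]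

lemma val_eval_eq_of_roots_lt (hC : ∀ c, wbar.toFun (C c) = vbar.toFun c)
    (hd : wbar.toFun (X - C a) = d) {F : L[X]}
    (h : ∀ β ∈ F.roots, wbar.toFun (X - C β) < d) :
    vbar.toFun (F.eval a) = wbar.toFun F :=
  apply_eq_of_splits (φ := fun F => vbar.toFun (F.eval a))
    (fun p q => by rw [eval_mul, vbar.map_mul']) wbar.map_mul'
    (by rw [eval_one, vbar.map_one]) wbar.map_one (IsAlgClosed.splits F) (by rw [eval_C, hC])
    fun β hβ => by rw [eval_sub, eval_X, eval_C, val_sub_eq_of_lt hC hd (h β hβ)]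

end CommonExtension

section KeyPolynomial

variable {L : Type*} [Field L] [Algebra K L]

lemma le_delta_of_mem_roots (wbar : ValOn L[X] Γ) {f : K[X]} {β : L}
    (hβ : β ∈ (f.map (algebraMap K L)).roots) :
    ((wbar.toFun (X - C β) : WithTop Γ) : WithBot (WithTop Γ)) ≤ delta wbar f :=
  Multiset.le_sup (Multiset.mem_map_of_mem _ hβ)

lemma exists_isRoot_delta_eq [IsAlgClosed L] (wbar : ValOn L[X] Γ) {Q : K[X]}
    (hQ : Q.Monic) (hdeg : 0 < Q.natDegree) :
    ∃ a, (Q.map (algebraMap K L)).IsRoot a ∧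
      delta wbar Q = ((wbar.toFun (X - C a) : WithTop Γ) : WithBot (WithTop Γ)) := by
  have hQ0 : Q.map (algebraMap K L) ≠ 0 := (hQ.map _).ne_zero
  obtain ⟨a₀, ha₀⟩ := IsAlgClosed.exists_root (Q.map (algebraMap K L))
    (by rw [degree_map]; exact (natDegree_pos_iff_degree_pos.mp hdeg).ne')
  obtain ⟨a, ha, hmax⟩ := Multiset.exists_max_image (fun α => wbar.toFun (X - C α))
    fun h => Multiset.notMem_zero a₀ (h ▸ (mem_roots hQ0).mpr ha₀)
  refine ⟨a, (mem_roots hQ0).mp ha, le_antisymm (Multiset.sup_le.mpr ?_)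
    (le_delta_of_mem_roots wbar ha)⟩
  rintro _ hx
  obtain ⟨β, hβ, rfl⟩ := Multiset.mem_map.mp hx
  exact WithBot.coe_le_coe.mpr (hmax β hβ)

lemma IsABKP.lt_of_mem_roots {wbar : ValOn L[X] Γ} {Q : K[X]} (hQ : IsABKP wbar Q) {d : Γ}
    (hδ : delta wbar Q = ((d : WithTop Γ) : WithBot (WithTop Γ))) {r : K[X]}
    (hr : r.degree < Q.degree) {β : L} (hβ : β ∈ (r.map (algebraMap K L)).roots) :
    wbar.toFun (X - C β) < d := by
  have hr0 : r ≠ 0 := by rintro rfl; simp at hβ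
  exact WithBot.coe_lt_coe.mp
    ((le_delta_of_mem_roots wbar hβ).trans_lt ((hQ.2 r hr0 hr).trans_eq hδ))

variable [IsAlgClosed L] {w : ValOn K[X] Γ} {vbar : ValOn L Γ} {wbar : ValOn L[X] Γ} {Q : K[X]}
  {a : L} {d : Γ}

lemma gaussValAt_map_eq_of_degree_lt (hcomm : IsCommonExt wbar w vbar) (hQ : IsABKP wbar Q)
    (hd : wbar.toFun (X - C a) = d) (hδ : delta wbar Q = ((d : WithTop Γ) : WithBot (WithTop Γ)))
    {r : K[X]} (hr : r.degree < Q.degree) :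
    (gaussValAt vbar d a).toFun (r.map (algebraMap K L)) = w.toFun r := by
  rw [← hcomm.1 r]
  exact gaussValAt_eq_of_roots_le hcomm.2 hd fun β hβ => (hQ.lt_of_mem_roots hδ hr hβ).le

lemma val_eval_map_eq_of_degree_lt (hcomm : IsCommonExt wbar w vbar) (hQ : IsABKP wbar Q)
    (hd : wbar.toFun (X - C a) = d) (hδ : delta wbar Q = ((d : WithTop Γ) : WithBot (WithTop Γ)))
    {r : K[X]} (hr : r.degree < Q.degree) :
    vbar.toFun ((r.map (algebraMap K L)).eval a) = w.toFun r := by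
  rw [← hcomm.1 r]
  exact val_eval_eq_of_roots_lt hcomm.2 hd fun β hβ => hQ.lt_of_mem_roots hδ hr hβ

lemma gaussValAt_map_add_mul (hcomm : IsCommonExt wbar w vbar) (hQ : IsABKP wbar Q)
    (ha : (Q.map (algebraMap K L)).IsRoot a) (hd : wbar.toFun (X - C a) = d)
    (hδ : delta wbar Q = ((d : WithTop Γ) : WithBot (WithTop Γ))) {r : K[X]}
    (hr : r.degree < Q.degree) (q : K[X]) :
    (gaussValAt vbar d a).toFun ((r + Q * q).map (algebraMap K L)) =
      min (w.toFun r) ((gaussValAt vbar d a).toFun ((Q * q).map (algebraMap K L))) := by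
  rw [← gaussValAt_map_eq_of_degree_lt hcomm hQ hd hδ hr, Polynomial.map_add]
  refine (gaussValAt vbar d a).map_add_eq_min_of_le ((gaussValAt_le_eval _).trans_eq ?_)
  rw [eval_add, Polynomial.map_mul, eval_mul, ha.eq_zero, zero_mul, add_zero,
    val_eval_map_eq_of_degree_lt hcomm hQ hd hδ hr,
    gaussValAt_map_eq_of_degree_lt hcomm hQ hd hδ hr]

theorem truncVal_eq_gaussValAt_map (hcomm : IsCommonExt wbar w vbar) (hQ : IsABKP wbar Q)
    (hdeg : 0 < Q.natDegree) (ha : (Q.map (algebraMap K L)).IsRoot a)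
    (hd : wbar.toFun (X - C a) = d) (hδ : delta wbar Q = ((d : WithTop Γ) : WithBot (WithTop Γ)))
    (f : K[X]) : truncVal w Q f = (gaussValAt vbar d a).toFun (f.map (algebraMap K L)) := by
  have hQ_eq : (gaussValAt vbar d a).toFun (Q.map (algebraMap K L)) = w.toFun Q := by
    rw [← hcomm.1 Q]
    exact gaussValAt_eq_of_roots_le hcomm.2 hd fun β hβ =>
      WithBot.coe_le_coe.mp ((le_delta_of_mem_roots wbar hβ).trans_eq hδ)
  induction hn : f.natDegree using Nat.strong_induction_on generalizing f with
  | _ n ih =>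
    have hquot : truncVal w Q (f /ₘ Q) =
        (gaussValAt vbar d a).toFun ((f /ₘ Q).map (algebraMap K L)) := by
      rcases eq_or_ne (f /ₘ Q) 0 with h | h
      · rw [h, truncVal_zero, Polynomial.map_zero, ValOn.map_zero']
      · have hf : f ≠ 0 := by rintro rfl; simp at h
        refine ih _ ?_ _ rfl
        rw [← hn]
        exact natDegree_lt_natDegree h
          (degree_divByMonic_lt f Q hf (natDegree_pos_iff_degree_pos.mp hdeg))
    rw [truncVal_eq_min hQ.1 hdeg, hquot, ← hQ_eq, ← ValOn.map_mul', ← Polynomial.map_mul,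
      ← gaussValAt_map_add_mul hcomm hQ ha hd hδ (degree_modByMonic_lt f hQ.1),
      modByMonic_add_div]

end KeyPolynomial

theorem truncation_is_valuation_general
    {K : Type*} [Field K] {Γ : Type*} [AddCommGroup Γ] [LinearOrder Γ] [IsOrderedAddMonoid Γ]
    {L : Type*} [Field L] [Algebra K L] [IsAlgClosure K L]
    (vbar : ValOn L Γ)
    (w : ValOn (Polynomial K) Γ)
    (wbar : ValOn (Polynomial L) Γ) (hcomm : IsCommonExt wbar w vbar)
    (Q : Polynomial K) (hQ : IsABKP wbar Q) :
    ∀ f g : Polynomial K,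
      truncVal w Q (f * g) = truncVal w Q f + truncVal w Q g ∧
      min (truncVal w Q f) (truncVal w Q g) ≤ truncVal w Q (f + g) := by
  intro f g
  rcases Nat.eq_zero_or_pos Q.natDegree with hdeg | hdeg
  · simp [hQ.1.natDegree_eq_zero.mp hdeg, truncVal_one]
  have : IsAlgClosed L := IsAlgClosure.isAlgClosed K
  obtain ⟨a, ha, hδ⟩ := exists_isRoot_delta_eq wbar hQ.1 hdeg
  obtain ⟨d, hd⟩ := WithTop.ne_top_iff_exists.mp (wbar.ne_top' _ (X_sub_C_ne_zero a))
  have h := truncVal_eq_gaussValAt_map hcomm hQ hdeg ha hd.symm (hd ▸ hδ)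
  simp only [h, Polynomial.map_mul, Polynomial.map_add]
  exact ⟨(gaussValAt vbar d a).map_mul' _ _, (gaussValAt vbar d a).add_min' _ _⟩

/-- if `Q` is an abstract key polynomial for `w`, then the `Q`-truncation
`w_Q` is a valuation on `K(X)`: it is multiplicative and satisfies the ultrametric
inequality on `K[X]`. -/
theorem truncation_is_valuation
    {K : Type*} [Field K] {Γ : Type*} [AddCommGroup Γ] [LinearOrder Γ] [IsOrderedAddMonoid Γ]
    {L : Type*} [Field L] [Algebra K L] [IsAlgClosure K L]
    (v : ValOn K Γ) (vbar : ValOn L Γ)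
    (hvbar : ∀ c : K, vbar.toFun (algebraMap K L c) = v.toFun c)
    (w : ValOn (Polynomial K) Γ) (hext : Extends w v)
    (wbar : ValOn (Polynomial L) Γ) (hcomm : IsCommonExt wbar w vbar)
    (Q : Polynomial K) (hQ : IsABKP wbar Q) :
    ∀ f g : Polynomial K,
      truncVal w Q (f * g) = truncVal w Q f + truncVal w Q g ∧
      min (truncVal w Q f) (truncVal w Q g) ≤ truncVal w Q (f + g) :=
  truncation_is_valuation_general vbar w wbar hcomm Q hQ

end MLV
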